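/- Let f : ℝ^d → ℝ be differentiable, let x, x* ∈ ℝ^d, γ > 0, ω ∈ (0,1), σ ∈ ℝ, and let H : Ω → ℝ^d be measurable with E[‖H‖²] < ∞ and E[H] = ∇f(x). If E[‖(x - γ·H) - x*‖²] ≤ ω‖x - x*‖² + γ²σ², then E[‖H‖²] ≤ (1/(1-ω))‖∇f(x)‖² + σ². (One-step form of Theorem 1(ii): when g is constant, the stochastic gradient mapping equals the stochastic gradient ∇K(x_t, ξ_t), and the conclusion is the weak growth condition.) -/

import Mathlib

/-!
Expanding the square, `E‖(x - x*) - γH‖² = ‖x - x*‖² - 2γ⟪x - x*, ∇f(x)⟫ + γ² E‖H‖²` by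
unbiasedness, so the contraction hypothesis bounds `γ² E‖H‖²` by
`2γ⟪x - x*, ∇f(x)⟫ - (1 - ω)‖x - x*‖² + γ²σ²`. Young's inequality with weight `1 - ω` absorbs
the cross term: `2γ⟪x - x*, ∇f(x)⟫ ≤ (1 - ω)‖x - x*‖² + γ²‖∇f(x)‖² / (1 - ω)`.
-/

open MeasureTheory

section

variable {E : Type*} [NormedAddCommGroup E] [InnerProductSpace ℝ E]

theorem two_mul_real_inner_le_add_mul_sq {ε : ℝ} (hε : 0 < ε) (u v : E) :
    2 * inner ℝ u v ≤ ε * ‖u‖ ^ 2 + ε⁻¹ * ‖v‖ ^ 2 :=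
  calc 2 * inner ℝ u v ≤ 2 * ‖u‖ * ‖v‖ := by
        rw [mul_assoc]; exact mul_le_mul_of_nonneg_left (real_inner_le_norm u v) two_pos.le
    _ ≤ ε * ‖u‖ ^ 2 + ε⁻¹ * ‖v‖ ^ 2 := two_mul_le_add_mul_sq hε

variable [CompleteSpace E] {Ω : Type*} [MeasurableSpace Ω]

theorem integral_norm_sub_smul_sq (P : Measure Ω) [IsProbabilityMeasure P] (u : E) (c : ℝ)
    {H : Ω → E} (hH : Integrable H P) (hH2 : Integrable (fun a => ‖H a‖ ^ 2) P) :
    ∫ a, ‖u - c • H a‖ ^ 2 ∂P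
      = ‖u‖ ^ 2 - 2 * c * inner ℝ u (∫ a, H a ∂P) + c ^ 2 * ∫ a, ‖H a‖ ^ 2 ∂P := by
  have hexpand : ∀ a,
      ‖u - c • H a‖ ^ 2 = ‖u‖ ^ 2 - 2 * c * inner ℝ u (H a) + c ^ 2 * ‖H a‖ ^ 2 := by
    intro a
    rw [norm_sub_sq_real, real_inner_smul_right, norm_smul, mul_pow, Real.norm_eq_abs, sq_abs]
    ring
  have hinner : Integrable (fun a => 2 * c * inner ℝ u (H a)) P :=
    ((innerSL ℝ u).integrable_comp hH).const_mul _
  have hlin : Integrable (fun a => ‖u‖ ^ 2 - 2 * c * inner ℝ u (H a)) P :=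
    (integrable_const _).sub hinner
  simp_rw [hexpand]
  rw [integral_add hlin (hH2.const_mul _),
    integral_sub (integrable_const _) hinner, integral_const, integral_const_mul,
    integral_const_mul, integral_inner hH]
  simp

end

theorem stmt_1_general {d : ℕ} {Ω : Type*} [MeasurableSpace Ω] (P : Measure Ω)
    [IsProbabilityMeasure P]
    (f : EuclideanSpace ℝ (Fin d) → ℝ)
    (x xstar : EuclideanSpace ℝ (Fin d))
    (γ ω σ : ℝ) (hγ : 0 < γ) (hω : ω ∈ Set.Ioo (0 : ℝ) 1)
    (H : Ω → EuclideanSpace ℝ (Fin d))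
    (hHint : Integrable H P)
    (hHL2 : Integrable (fun a => ‖H a‖ ^ 2) P)
    (hunbiased : ∫ a, H a ∂P = gradient f x)
    (hstep : ∫ a, ‖x - γ • H a - xstar‖ ^ 2 ∂P ≤ ω * ‖x - xstar‖ ^ 2 + γ ^ 2 * σ ^ 2) :
    ∫ a, ‖H a‖ ^ 2 ∂P ≤ (1 / (1 - ω)) * ‖gradient f x‖ ^ 2 + σ ^ 2 := by
  simp_rw [sub_right_comm x] at hstep
  rw [integral_norm_sub_smul_sq P _ γ hHint hHL2, hunbiased] at hstep
  have hyoung := two_mul_real_inner_le_add_mul_sq (sub_pos.2 hω.2) (x - xstar) (γ • gradient f x)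
  rw [real_inner_smul_right, norm_smul, mul_pow, Real.norm_eq_abs, sq_abs] at hyoung
  have hbound : γ ^ 2 * ∫ a, ‖H a‖ ^ 2 ∂P
      ≤ γ ^ 2 * ((1 / (1 - ω)) * ‖gradient f x‖ ^ 2 + σ ^ 2) := by
    rw [one_div]; linarith
  exact le_of_mul_le_mul_left hbound (by positivity)

/-- One-step form of Theorem 1(ii): when `g` is constant the stochastic gradient
mapping equals the stochastic gradient itself, and the contraction property
implies the weak growth condition. -/
theorem stmt_1 {d : ℕ} {Ω : Type*} [MeasurableSpace Ω] (P : Measure Ω)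
    [IsProbabilityMeasure P]
    (f : EuclideanSpace ℝ (Fin d) → ℝ) (hfdiff : Differentiable ℝ f)
    (x xstar : EuclideanSpace ℝ (Fin d))
    (γ ω σ : ℝ) (hγ : 0 < γ) (hω : ω ∈ Set.Ioo (0 : ℝ) 1)
    (H : Ω → EuclideanSpace ℝ (Fin d)) (hHmeas : Measurable H)
    (hHint : Integrable H P)
    (hHL2 : Integrable (fun a => ‖H a‖ ^ 2) P)
    (hunbiased : ∫ a, H a ∂P = gradient f x)
    (hstep : ∫ a, ‖x - γ • H a - xstar‖ ^ 2 ∂P ≤ ω * ‖x - xstar‖ ^ 2 + γ ^ 2 * σ ^ 2) :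
    ∫ a, ‖H a‖ ^ 2 ∂P ≤ (1 / (1 - ω)) * ‖gradient f x‖ ^ 2 + σ ^ 2 :=
  stmt_1_general P f x xstar γ ω σ hγ hω H hHint hHL2 hunbiased hstep
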